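/- arXiv:1407.8391 — 3 statements merged into one kernel-verified Lean document; each statement's English description precedes it below -/
import Mathlib

section
/- For all sufficiently large integers n and every integer q ≥ 0.49·n, in the (q:1) Waiter-Client game on E(K_n) Client has a strategy to ensure that at the end of the game the minimum degree of Client's graph is at most one, i.e., some vertex of Client's graph has degree at most 1. -/
open SimpleGraph

/-- In the Waiter-Client game with bias `q`, set of free elements `F` and set `C` of elements
claimed so far by Client, Client has a strategy to ensure that the final set of elements
claimed by him satisfies `P`.  In every round Waiter offers `q + 1` free elements, Client
claims one of them and the remaining `q` go to Waiter; when fewer than `q + 1` free elements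
remain, Waiter claims all of them and the game ends. -/
def ClientCanEnsure {α : Type*} [DecidableEq α] (q : ℕ) (P : Finset α → Prop)
    (F C : Finset α) : Prop :=
  if F.card < q + 1 then P C
  else ∀ O ⊆ F, O.card = q + 1 → ∃ x ∈ O, ClientCanEnsure q P (F \ O) (insert x C)
  termination_by F.card
  decreasing_by
    have h1 : O.Nonempty := by rw [← Finset.card_pos]; omega
    have h2 := Finset.card_sdiff_of_subset ‹O ⊆ F›
    have h3 := Finset.card_le_card ‹O ⊆ F›
    have h4 := Finset.card_pos.mpr h1
    omega

/-- In the Waiter-Client game with bias `q`, set of free elements `F` and set `C` of elements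
claimed so far by Client, Waiter has a strategy to ensure that the final set of elements
claimed by Client satisfies `P`.  In every round Waiter offers `q + 1` free elements, Client
claims one of them and the remaining `q` go to Waiter; when fewer than `q + 1` free elements
remain, Waiter claims all of them and the game ends.  (The hypothesis `O ⊆ F` guarding the
recursive call is redundant; it is only there to justify termination.) -/
def WaiterCanForce {α : Type*} [DecidableEq α] (q : ℕ) (P : Finset α → Prop)
    (F C : Finset α) : Prop :=
  if F.card < q + 1 then P C
  else ∃ O ⊆ F, O.card = q + 1 ∧
    ∀ x ∈ O, O ⊆ F → WaiterCanForce q P (F \ O) (insert x C)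
  termination_by F.card
  decreasing_by
    have h1 : O.Nonempty := ⟨x, ‹x ∈ O›⟩
    have h2 := Finset.card_sdiff_of_subset ‹O ⊆ F›
    have h3 := Finset.card_le_card ‹O ⊆ F›
    have h4 := Finset.card_pos.mpr h1
    omega

/-- Client's graph: the simple graph on `V` whose edges are the elements claimed by Client. -/
def clientGraph {V : Type*} (C : Finset (Sym2 V)) : SimpleGraph V :=
  SimpleGraph.fromEdgeSet ↑C

/-- The board of the game played on `E(K_n)`: all non-loop edges of the complete graph `K_n`. -/
def knBoard (n : ℕ) : Finset (Sym2 (Fin n)) :=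
  Finset.univ.filter fun e => ¬ e.IsDiag

/-!
Call a vertex live while Client owns at most one edge at it; Client wins iff some vertex is
still live at the end. Write `Q = q + 1` and `d_C`, `d_F` for Client and free degrees. A live
vertex `v` with fewer than `(2 - d_C v) * Q` free edges is protectable: Client keeps it live by
always taking an offered edge that avoids `v`, and when all `Q` offered edges contain `v` he must
have had no edge at `v` yet and afterwards fewer than `Q` free edges remain there.

While no vertex is protectable, Client takes an offered edge with the fewest live endpoints and
keeps the potential
  `(4Q + 1)|F| - 2Q² Σ_v (2 - d_C v) - Q (Σ_{j < #live} (Q - j) + Σ_{v dead} d_F v)`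
from increasing. The `Q` free edges removed each round pay for the live endpoints of Client's
edge and for the dead endpoints of the offer (all subtractions are truncated at `0`). The only
tight case is when every offered edge has two live endpoints: then a vertex that dies lies on
fewer than `#live` offered edges, so it keeps at least `Q - (#live - 1)` free edges, which is
what the sum over `j` loses. Once every vertex is dead the potential is nonnegative because
`Σ_v d_F v ≤ 2|F|`. On `K_n` either `n ≤ 2Q` and every vertex is protectable at the start, or
the initial potential is about `(2t - 4t² - t³/2) n³` with `t = Q/n ≥ 0.49`, which is negative.
-/

open Finset

theorem ClientCanEnsure.of_invariant {α : Type*} [DecidableEq α] {q : ℕ}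
    {P : Finset α → Prop} (I : Finset α → Finset α → Prop)
    (final : ∀ F C, I F C → #F < q + 1 → P C)
    (step : ∀ F C, I F C → ∀ O ⊆ F, #O = q + 1 → ∃ x ∈ O, I (F \ O) (insert x C)) :
    ∀ F C, I F C → ClientCanEnsure q P F C := by
  intro F
  induction F using Finset.strongInduction with
  | H F ih =>
    intro C hI
    rw [ClientCanEnsure]
    split_ifs with hF
    · exact final F C hI hF
    · intro O hO hOcard
      obtain ⟨x, hx, hI'⟩ := step F C hI O hO hOcard
      exact ⟨x, hx, ih _ (sdiff_ssubset hO ⟨x, hx⟩) _ hI'⟩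

namespace WaiterClient

section Degrees

variable {V : Type*} [DecidableEq V]

def edgeDeg (E : Finset (Sym2 V)) (v : V) : ℕ := #{e ∈ E | v ∈ e}

lemma edgeDeg_mono {E F : Finset (Sym2 V)} (h : E ⊆ F) (v : V) : edgeDeg E v ≤ edgeDeg F v :=
  card_le_card (filter_subset_filter _ h)

lemma edgeDeg_sdiff_add_edgeDeg {O F : Finset (Sym2 V)} (h : O ⊆ F) (v : V) :
    edgeDeg (F \ O) v + edgeDeg O v = edgeDeg F v := by
  simp only [edgeDeg, card_filter]
  exact sum_sdiff h

lemma edgeDeg_insert {x : Sym2 V} {C : Finset (Sym2 V)} (hx : x ∉ C) (v : V) :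
    edgeDeg (insert x C) v = edgeDeg C v + if v ∈ x then 1 else 0 := by
  rw [edgeDeg, edgeDeg, filter_insert]
  split_ifs
  · exact card_insert_of_notMem fun h => hx (mem_filter.mp h).1
  · rfl

lemma edgeDeg_insert_le (x : Sym2 V) (C : Finset (Sym2 V)) (v : V) :
    edgeDeg (insert x C) v ≤ edgeDeg C v + 1 := by
  rw [edgeDeg, edgeDeg, filter_insert]
  split_ifs
  · exact card_insert_le _ _
  · omega

lemma edgeDeg_insert_of_notMem {x : Sym2 V} (C : Finset (Sym2 V)) {v : V} (hv : v ∉ x) :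
    edgeDeg (insert x C) v = edgeDeg C v := by
  rw [edgeDeg, edgeDeg, filter_insert, if_neg hv]

lemma sum_edgeDeg_eq_sum_card_filter (S : Finset V) (E : Finset (Sym2 V)) :
    ∑ v ∈ S, edgeDeg E v = ∑ e ∈ E, #{v ∈ S | v ∈ e} := by
  simp only [edgeDeg, card_filter]
  exact sum_comm

lemma card_filter_mem_sym2_le_two (S : Finset V) (e : Sym2 V) : #{v ∈ S | v ∈ e} ≤ 2 := by
  induction e using Sym2.ind with
  | h a b =>
    calc #{v ∈ S | v ∈ s(a, b)} ≤ #({a, b} : Finset V) :=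
          card_le_card fun v hv => by simp only [mem_filter, Sym2.mem_iff] at hv; simp [hv.2]
      _ ≤ 2 := card_le_two

lemma of_card_filter_mem_sym2_eq_two {S : Finset V} {e : Sym2 V} (h : #{v ∈ S | v ∈ e} = 2) :
    ¬ e.IsDiag ∧ ∀ w ∈ e, w ∈ S := by
  induction e using Sym2.ind with
  | h a b =>
    have hsub : {v ∈ S | v ∈ s(a, b)} ⊆ {a, b} := fun v hv => by
      simp only [mem_filter, Sym2.mem_iff] at hv; simp [hv.2]
    have heq := eq_of_subset_of_card_le hsub (h ▸ card_le_two)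
    have hab : a ≠ b := by
      rintro rfl
      rw [heq] at h
      simp at h
    refine ⟨Sym2.mk_isDiag_iff.not.mpr hab, fun w hw => ?_⟩
    have : w ∈ {v ∈ S | v ∈ s(a, b)} := heq ▸ by simpa [Sym2.mem_iff] using hw
    exact (mem_filter.mp this).1

lemma sum_edgeDeg_le (S : Finset V) (E : Finset (Sym2 V)) : ∑ v ∈ S, edgeDeg E v ≤ 2 * #E := by
  rw [sum_edgeDeg_eq_sum_card_filter, mul_comm, ← smul_eq_mul, ← sum_const]
  exact sum_le_sum fun e _ => card_filter_mem_sym2_le_two S e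

lemma edgeDeg_lt_card {E : Finset (Sym2 V)} {S : Finset V} {v : V} (hv : v ∈ S)
    (h : ∀ e ∈ E, v ∈ e → ¬ e.IsDiag ∧ ∀ w ∈ e, w ∈ S) : edgeDeg E v < #S := by
  have hsub : {e ∈ E | v ∈ e} ⊆ (S.erase v).image (fun w => s(v, w)) := by
    intro e he
    obtain ⟨heE, hve⟩ := mem_filter.mp he
    obtain ⟨w, rfl⟩ := Sym2.mem_iff_exists.mp hve
    obtain ⟨hdiag, hS⟩ := h _ heE hve
    exact mem_image.mpr ⟨w, mem_erase.mpr ⟨fun hw => hdiag (hw ▸ Sym2.mk_isDiag_iff.mpr rfl),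
      hS w (Sym2.mem_mk_right v w)⟩, rfl⟩
  calc edgeDeg E v ≤ #((S.erase v).image (fun w => s(v, w))) := card_le_card hsub
    _ ≤ #(S.erase v) := card_image_le
    _ < #S := card_erase_lt_of_mem hv

lemma ncard_neighborSet_clientGraph_le (C : Finset (Sym2 V)) (v : V) :
    ((clientGraph C).neighborSet v).ncard ≤ edgeDeg C v := by
  rw [edgeDeg, ← Set.ncard_coe_finset]
  refine Set.ncard_le_ncard_of_injOn (fun w => s(v, w)) (fun w hw => ?_) ?_
  · rw [SimpleGraph.mem_neighborSet, clientGraph, SimpleGraph.fromEdgeSet_adj] at hw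
    simpa using hw.1
  · intro w₁ _ w₂ _ h
    exact Sym2.congr_right.mp h

def Protectable (Q : ℕ) (F C : Finset (Sym2 V)) : Prop :=
  ∃ v, edgeDeg C v ≤ 1 ∧ edgeDeg F v < (2 - edgeDeg C v) * Q

lemma Protectable.exists_step {Q : ℕ} {F C O : Finset (Sym2 V)} (h : Protectable Q F C)
    (hO : O ⊆ F) (hOcard : #O = Q) : ∃ x ∈ O, Protectable Q (F \ O) (insert x C) := by
  obtain ⟨v, hlive, hfree⟩ := h
  by_cases hall : ∀ x ∈ O, v ∈ x
  · -- all offered edges contain `v`, so `v` has at least `Q` free edges and no Client edge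
    have hOv : edgeDeg O v = Q := by rw [edgeDeg, filter_true_of_mem hall, hOcard]
    have hsplit := edgeDeg_sdiff_add_edgeDeg hO v
    have hC : edgeDeg C v = 0 := by
      obtain h | h : edgeDeg C v = 0 ∨ edgeDeg C v = 1 := by omega
      · exact h
      · rw [h] at hfree; omega
    rw [hC] at hfree
    obtain ⟨x, hx⟩ := card_pos.mp (show 0 < #O by omega)
    have hx' := edgeDeg_insert_le x C v
    refine ⟨x, hx, v, by omega, ?_⟩
    obtain h | h : edgeDeg (insert x C) v = 0 ∨ edgeDeg (insert x C) v = 1 := by omega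
    all_goals rw [h]; omega
  · obtain ⟨x, hx, hvx⟩ := not_forall₂.mp hall
    refine ⟨x, hx, v, ?_, ?_⟩ <;> rw [edgeDeg_insert_of_notMem C hvx]
    · exact hlive
    · exact (edgeDeg_mono sdiff_subset v).trans_lt hfree

end Degrees

def liveBonus (Q ℓ : ℕ) : ℕ := ∑ j ∈ range ℓ, (Q - j)

lemma liveBonus_succ (Q ℓ : ℕ) : liveBonus Q (ℓ + 1) = liveBonus Q ℓ + (Q - ℓ) :=
  sum_range_succ _ _

lemma liveBonus_le_liveBonus_sub_add {Q L k : ℕ} (hk : k ≤ 2) :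
    liveBonus Q L ≤ liveBonus Q (L - k) + k * (Q - (L - 1)) + 1 := by
  rcases L with _ | _ | L <;> interval_cases k <;> simp [liveBonus_succ] <;> omega

lemma two_mul_liveBonus {Q ℓ : ℕ} (h : Q ≤ ℓ) : 2 * liveBonus Q ℓ = Q * (Q + 1) := by
  have htail : liveBonus Q ℓ = ∑ j ∈ range Q, (Q - j) :=
    (sum_subset (range_subset_range.mpr h) fun j hj hjQ => by simp_all).symm
  have hreflect : ∑ j ∈ range Q, (Q - j) = ∑ j ∈ range Q, (j + 1) := by
    rw [← sum_range_reflect]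
    exact sum_congr rfl fun j hj => by simp at hj; omega
  rw [htail, hreflect, sum_add_distrib, mul_add, mul_comm 2, sum_range_id_mul_two]
  simp only [sum_const, card_range, smul_eq_mul, mul_one]
  cases Q with
  | zero => rfl
  | succ Q => rw [Nat.add_sub_cancel]; ring

section Potential

variable {V : Type*} [Fintype V] [DecidableEq V]

def liveSet (C : Finset (Sym2 V)) : Finset V := {v | edgeDeg C v ≤ 1}

def newlyDead (C : Finset (Sym2 V)) (x : Sym2 V) : Finset V := {v | v ∈ x ∧ edgeDeg C v = 1}

def deficit (C : Finset (Sym2 V)) : ℕ := ∑ v, (2 - edgeDeg C v)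

def deadDeg (F C : Finset (Sym2 V)) : ℕ := ∑ v ∈ (liveSet C)ᶜ, edgeDeg F v

def potential (Q : ℕ) (F C : Finset (Sym2 V)) : ℤ :=
  (4 * Q + 1) * #F - 2 * Q ^ 2 * deficit C - Q * (liveBonus Q #(liveSet C) + deadDeg F C)

@[simp]
lemma mem_liveSet {C : Finset (Sym2 V)} {v : V} : v ∈ liveSet C ↔ edgeDeg C v ≤ 1 := by
  simp [liveSet]

lemma newlyDead_subset_liveSet (C : Finset (Sym2 V)) (x : Sym2 V) :
    newlyDead C x ⊆ liveSet C := fun v hv => by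
  simp only [newlyDead, mem_filter] at hv; simp [hv.2.2]

lemma newlyDead_subset_filter (C : Finset (Sym2 V)) (x : Sym2 V) :
    newlyDead C x ⊆ {v ∈ liveSet C | v ∈ x} := fun v hv => by
  simp only [newlyDead, mem_filter] at hv; simp [hv.2.1, hv.2.2]

lemma liveSet_insert {x : Sym2 V} {C : Finset (Sym2 V)} (hx : x ∉ C) :
    liveSet (insert x C) = liveSet C \ newlyDead C x := by
  ext v
  simp only [mem_liveSet, newlyDead, mem_sdiff, mem_filter, mem_univ, true_and,
    edgeDeg_insert hx]
  split_ifs with hv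
  · simp only [hv, true_and]
    omega
  · simp [hv]

lemma card_liveSet_insert {x : Sym2 V} {C : Finset (Sym2 V)} (hx : x ∉ C) :
    #(liveSet (insert x C)) = #(liveSet C) - #(newlyDead C x) := by
  rw [liveSet_insert hx, card_sdiff_of_subset (newlyDead_subset_liveSet C x)]

lemma deficit_insert {x : Sym2 V} {C : Finset (Sym2 V)} (hx : x ∉ C) :
    deficit (insert x C) + #{v ∈ liveSet C | v ∈ x} = deficit C := by
  rw [deficit, deficit, liveSet, filter_filter, card_filter, ← sum_add_distrib]
  refine sum_congr rfl fun v _ => ?_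
  rw [edgeDeg_insert hx]
  by_cases hv : v ∈ x <;> by_cases hd : edgeDeg C v ≤ 1 <;> simp [hv, hd] <;> omega

lemma deadDeg_insert_sdiff {x : Sym2 V} {C O F : Finset (Sym2 V)} (hx : x ∉ C) (hO : O ⊆ F) :
    deadDeg (F \ O) (insert x C) + ∑ v ∈ (liveSet C)ᶜ, edgeDeg O v
      = deadDeg F C + ∑ v ∈ newlyDead C x, edgeDeg (F \ O) v := by
  have hcompl : (liveSet (insert x C))ᶜ = (liveSet C)ᶜ ∪ newlyDead C x := by
    rw [liveSet_insert hx, sdiff_eq, compl_inf, compl_compl, sup_eq_union]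
  have hdisj : Disjoint (liveSet C)ᶜ (newlyDead C x) :=
    disjoint_compl_left.mono_right (newlyDead_subset_liveSet C x)
  rw [deadDeg, deadDeg, hcompl, sum_union hdisj, add_right_comm, ← sum_add_distrib]
  simp only [edgeDeg_sdiff_add_edgeDeg hO]

lemma sum_edgeDeg_compl_liveSet_le {C O : Finset (Sym2 V)} {m : ℕ}
    (hm : ∀ e ∈ O, m ≤ #{v ∈ liveSet C | v ∈ e}) :
    ∑ v ∈ (liveSet C)ᶜ, edgeDeg O v ≤ #O * (2 - m) := by
  rw [sum_edgeDeg_eq_sum_card_filter, ← smul_eq_mul, ← sum_const]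
  refine sum_le_sum fun e he => ?_
  have hsplit : #{v ∈ (liveSet C)ᶜ | v ∈ e} + #{v ∈ liveSet C | v ∈ e} = #{v | v ∈ e} := by
    simp only [card_filter]
    exact sum_compl_add_sum _ _
  have := card_filter_mem_sym2_le_two univ e
  have := hm e he
  omega

lemma exists_edgeDeg_le_one_of_potential_neg {Q : ℕ} {F C : Finset (Sym2 V)}
    (h : potential Q F C < 0) : ∃ v, edgeDeg C v ≤ 1 := by
  by_contra! hdead
  have hlive : liveSet C = ∅ := by ext v; simpa using hdead v
  have hdeficit : deficit C = 0 := sum_eq_zero fun v _ => by have := hdead v; omega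
  have hdeadDeg : deadDeg F C ≤ 2 * #F := sum_edgeDeg_le _ F
  rw [potential, hlive, hdeficit, card_empty] at h
  simp only [liveBonus, range_zero, sum_empty] at h
  have : (deadDeg F C : ℤ) ≤ 2 * #F := by exact_mod_cast hdeadDeg
  push_cast at h
  nlinarith [mul_le_mul_of_nonneg_left this (Nat.cast_nonneg Q : (0 : ℤ) ≤ Q)]

lemma potential_step_bound {Q : ℕ} {F C O : Finset (Sym2 V)} {x : Sym2 V}
    (hfree : ∀ v, edgeDeg C v = 1 → Q ≤ edgeDeg F v) (hO : O ⊆ F) (hOcard : #O = Q)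
    (hmin : ∀ e ∈ O, #{v ∈ liveSet C | v ∈ x} ≤ #{v ∈ liveSet C | v ∈ e}) :
    2 * Q * #{v ∈ liveSet C | v ∈ x} + liveBonus Q #(liveSet C)
        + ∑ v ∈ (liveSet C)ᶜ, edgeDeg O v
      ≤ 4 * Q + 1 + ∑ v ∈ newlyDead C x, edgeDeg (F \ O) v
        + liveBonus Q (#(liveSet C) - #(newlyDead C x)) := by
  have hkl := card_le_card (newlyDead_subset_filter C x)
  have hlam_le := card_filter_mem_sym2_le_two (liveSet C) x
  have hdead := sum_edgeDeg_compl_liveSet_le hmin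
  have hbonus := liveBonus_le_liveBonus_sub_add (Q := Q) (L := #(liveSet C)) (hkl.trans hlam_le)
  rw [hOcard] at hdead
  generalize #{v ∈ liveSet C | v ∈ x} = lam at *
  obtain hlam | rfl : lam ≤ 1 ∨ lam = 2 := by omega
  · have := Nat.mul_le_mul hkl (Nat.sub_le Q (#(liveSet C) - 1))
    interval_cases lam <;> omega
  · -- every offered edge joins two live vertices, so a dying vertex lies on fewer than
    -- `#(liveSet C)` of them and keeps at least `Q - (#(liveSet C) - 1)` free edges
    have hSnew : #(newlyDead C x) * (Q - (#(liveSet C) - 1))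
        ≤ ∑ v ∈ newlyDead C x, edgeDeg (F \ O) v := by
      rw [← smul_eq_mul]
      refine card_nsmul_le_sum _ _ _ fun v hv => ?_
      have hv1 : edgeDeg C v = 1 := (mem_filter.mp hv).2.2
      have hlt : edgeDeg O v < #(liveSet C) :=
        edgeDeg_lt_card (newlyDead_subset_liveSet C x hv) fun e he _ =>
          of_card_filter_mem_sym2_eq_two
            (le_antisymm (card_filter_mem_sym2_le_two _ _) (hmin e he))
      have := hfree v hv1
      have := edgeDeg_sdiff_add_edgeDeg hO v
      omega
    omega

lemma exists_mem_potential_insert_le {Q : ℕ} {F C O : Finset (Sym2 V)} (hCF : Disjoint C F)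
    (hfree : ∀ v, edgeDeg C v = 1 → Q ≤ edgeDeg F v) (hO : O ⊆ F) (hOcard : #O = Q)
    (hQ : 0 < Q) : ∃ x ∈ O, potential Q (F \ O) (insert x C) ≤ potential Q F C := by
  obtain ⟨x, hx, hmin⟩ :=
    exists_min_image O (fun e => #{v ∈ liveSet C | v ∈ e}) (card_pos.mp (hOcard ▸ hQ))
  refine ⟨x, hx, ?_⟩
  have hxC : x ∉ C := disjoint_right.mp hCF (hO hx)
  have hF := card_sdiff_add_card_eq_card hO
  have hdeficit := deficit_insert hxC
  have hdeadDeg := deadDeg_insert_sdiff hxC hO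
  have hk := card_le_card (newlyDead_subset_liveSet C x)
  have hineq := potential_step_bound hfree hO hOcard hmin
  rw [hOcard] at hF
  rw [potential, potential, card_liveSet_insert hxC]
  zify [hk] at hF hdeficit hdeadDeg hineq ⊢
  linear_combination (Q : ℤ) * hineq + (4 * Q + 1) * hF - 2 * Q ^ 2 * hdeficit - Q * hdeadDeg

end Potential

lemma clientCanEnsure_exists_ncard_neighborSet_le_one {V : Type*} [Fintype V] [DecidableEq V]
    {q : ℕ} {F C : Finset (Sym2 V)} (hCF : Disjoint C F)
    (h : Protectable (q + 1) F C ∨ potential (q + 1) F C < 0) :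
    ClientCanEnsure q (fun C => ∃ v, ((clientGraph C).neighborSet v).ncard ≤ 1) F C := by
  refine ClientCanEnsure.of_invariant
    (fun F C => Disjoint C F ∧ (Protectable (q + 1) F C ∨ potential (q + 1) F C < 0))
    (fun F C hI _ => ?_) (fun F C hI O hO hOcard => ?_) F C ⟨hCF, h⟩
  · obtain ⟨v, hv⟩ : ∃ v, edgeDeg C v ≤ 1 :=
      hI.2.elim (fun ⟨v, hv, _⟩ => ⟨v, hv⟩) exists_edgeDeg_le_one_of_potential_neg
    exact ⟨v, (ncard_neighborSet_clientGraph_le C v).trans hv⟩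
  · have hdisj : ∀ x ∈ O, Disjoint (insert x C) (F \ O) := fun x hx =>
      disjoint_insert_left.mpr ⟨fun h => (mem_sdiff.mp h).2 hx, hI.1.mono_right sdiff_subset⟩
    by_cases hP : Protectable (q + 1) F C
    · obtain ⟨x, hx, hP'⟩ := hP.exists_step hO hOcard
      exact ⟨x, hx, hdisj x hx, Or.inl hP'⟩
    · have hfree : ∀ v, edgeDeg C v = 1 → q + 1 ≤ edgeDeg F v := fun v hv => by
        by_contra hlt
        exact hP ⟨v, hv.le, by rw [hv]; omega⟩
      obtain ⟨x, hx, hpot⟩ := exists_mem_potential_insert_le hI.1 hfree hO hOcard q.succ_pos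
      exact ⟨x, hx, hdisj x hx, Or.inr (hpot.trans_lt (hI.2.resolve_left hP))⟩

lemma two_mul_card_knBoard (n : ℕ) : 2 * #(knBoard n) = n * (n - 1) := by
  have h := Sym2.card_subtype_not_diag (α := Fin n)
  rw [Fintype.card_subtype, Fintype.card_fin] at h
  rw [knBoard, h, Nat.choose_two_right, Nat.mul_div_cancel' (Nat.even_mul_pred_self n).two_dvd]

lemma edgeDeg_knBoard_lt {n : ℕ} (v : Fin n) : edgeDeg (knBoard n) v < n := by
  have := edgeDeg_lt_card (E := knBoard n) (mem_univ v) fun e he _ =>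
    ⟨(mem_filter.mp he).2, fun w _ => mem_univ w⟩
  rwa [card_univ, Fintype.card_fin] at this

lemma potential_knBoard_neg {n q : ℕ} (h49 : 49 * n ≤ 100 * q) (hn : 2 * (q + 1) < n) :
    potential (q + 1) (knBoard n) ∅ < 0 := by
  have hdeficit : deficit (∅ : Finset (Sym2 (Fin n))) = 2 * n := by
    simp [deficit, edgeDeg, mul_comm]
  have hlive : liveSet (∅ : Finset (Sym2 (Fin n))) = univ := by ext; simp [edgeDeg]
  have hdeadDeg : deadDeg (knBoard n) ∅ = 0 := by simp [deadDeg, hlive]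
  have hbonus := two_mul_liveBonus (Q := q + 1) (ℓ := n) (by omega)
  have hboard := two_mul_card_knBoard n
  rw [potential, hdeficit, hlive, hdeadDeg, card_univ, Fintype.card_fin]
  zify [show 1 ≤ n by omega] at hbonus hboard h49 hn ⊢
  set Q : ℤ := q + 1
  -- `8Qn + Q² - 4n² = (Q - 0.49n)(Q + 8.49n) + 0.1601n²`, and the hypotheses force `Q ≥ 75`
  have hcubic : (4 * Q + 1) * (n * (n - 1)) < 8 * Q ^ 2 * n + Q * (Q * (Q + 1)) := by
    nlinarith [mul_nonneg (mul_nonneg (show (0 : ℤ) ≤ Q by omega)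
        (show 0 ≤ 100 * Q - 49 * n by omega)) (show (0 : ℤ) ≤ 100 * Q + 849 * n by omega),
      mul_nonneg (show (0 : ℤ) ≤ 1601 * Q - 10000 by omega) (sq_nonneg (n : ℤ))]
  linarith [congrArg ((4 * Q + 1) * ·) hboard, congrArg (Q * ·) hbonus]

lemma protectable_or_potential_knBoard_neg {n q : ℕ} (hn : 0 < n) (h49 : 49 * n ≤ 100 * q) :
    Protectable (q + 1) (knBoard n) ∅ ∨ potential (q + 1) (knBoard n) ∅ < 0 := by
  by_cases h : n ≤ 2 * (q + 1)
  · have := edgeDeg_knBoard_lt (⟨0, hn⟩ : Fin n)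
    exact Or.inl ⟨⟨0, hn⟩, by simp [edgeDeg], by simp [edgeDeg] at this ⊢; omega⟩
  · exact Or.inr (potential_knBoard_neg h49 (by omega))

end WaiterClient

/-- For all sufficiently large `n` and every integer `q ≥ 0.49 n`, in the
`(q : 1)` Waiter-Client game on `E(K_n)` Client has a strategy ensuring that at the end of
the game some vertex of his graph has degree at most `1`. -/
theorem statement4 :
    ∃ N : ℕ, ∀ n : ℕ, N ≤ n → ∀ q : ℕ, (0.49 : ℝ) * n ≤ (q : ℝ) →
      ClientCanEnsure q
        (fun C : Finset (Sym2 (Fin n)) =>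
          ∃ v : Fin n, ((clientGraph C).neighborSet v).ncard ≤ 1)
        (knBoard n) ∅ := by
  refine ⟨1, fun n hn q hq => ?_⟩
  have h49 : 49 * n ≤ 100 * q := by
    have : (49 * n : ℝ) ≤ 100 * q := by linarith
    exact_mod_cast this
  exact WaiterClient.clientCanEnsure_exists_ncard_neighborSet_le_one (disjoint_empty_left _)
    (WaiterClient.protectable_or_potential_knBoard_neg hn h49)
end

section
/- Let q be a positive integer, let X be a finite set, let I be a finite index set, and let (A_i)_{i∈I} be a family of (not necessarily distinct) subsets of X. Set Φ = Σ_{i∈I} (q+1)^{-|A_i|}. Then, playing the Waiter-Client game on X with bias q, Client has a strategy to ensure that at the end of the game the number of indices i ∈ I for which A_i is entirely contained in the set of elements claimed by Client is at most Φ. -/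
open SimpleGraph

/-! Beck's potential method. Give each `A i` the weight `(q+1)^{-k}`, where `k` is the number of
its elements Client still lacks, and weight `0` once Waiter owns one of its elements. Whatever
`q + 1` free elements Waiter offers, the weights after the `q + 1` possible answers of Client sum
to at most `q + 1` times the current weight, so Client has an answer that does not increase the
total. At the end each fully claimed `A i` weighs `1`, and at the start the total is at most `Φ`. -/

open Finset

section Potential

variable {α : Type*} [DecidableEq α]

theorem ClientCanEnsure.of_potential {q : ℕ} {P : Finset α → Prop} {r : ℝ}
    (Φ : Finset α → Finset α → ℝ)
    (hstep : ∀ F C O, O ⊆ F → #O = q + 1 →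
      ∑ x ∈ O, Φ (F \ O) (insert x C) ≤ (q + 1) * Φ F C)
    (hend : ∀ F C, #F < q + 1 → Φ F C ≤ r → P C) (F C : Finset α) (hΦ : Φ F C ≤ r) :
    ClientCanEnsure q P F C := by
  induction F using Finset.strongInduction generalizing C with
  | _ F ih =>
  rw [ClientCanEnsure]
  split_ifs with hF
  · exact hend F C hF hΦ
  · intro O hOF hO
    have hne : O.Nonempty := by rw [← card_pos]; omega
    have hsum : ∑ x ∈ O, Φ (F \ O) (insert x C) ≤ ∑ x ∈ O, Φ F C := by
      simpa [hO] using hstep F C O hOF hO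
    obtain ⟨x, hx, hxΦ⟩ := exists_le_of_sum_le hne hsum
    exact ⟨x, hx, ih _ (sdiff_ssubset hOF hne) _ (hxΦ.trans hΦ)⟩

end Potential

section Weight

variable {α : Type*} [DecidableEq α] {q : ℕ} {A F C O : Finset α} {x : α}

/-- `A ⊆ C ∪ F` says that Waiter owns no element of `A`. -/
noncomputable def clientWeight (q : ℕ) (A F C : Finset α) : ℝ :=
  if A ⊆ C ∪ F then (((q : ℝ) + 1) ^ #(A \ C))⁻¹ else 0

lemma clientWeight_nonneg : 0 ≤ clientWeight q A F C := by
  unfold clientWeight; split_ifs <;> positivity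

lemma clientWeight_le : clientWeight q A F C ≤ (((q : ℝ) + 1) ^ #(A \ C))⁻¹ := by
  unfold clientWeight; split_ifs <;> first | rfl | positivity

lemma clientWeight_of_subset (h : A ⊆ C) : clientWeight q A F C = 1 := by
  simp [clientWeight, h.trans subset_union_left, sdiff_eq_empty_iff_subset.mpr h]

lemma clientWeight_eq_zero {y : α} (hyA : y ∈ A) (hyC : y ∉ C) (hyF : y ∉ F) :
    clientWeight q A F C = 0 :=
  if_neg fun h => by simpa [hyC, hyF] using h hyA

lemma clientWeight_insert_le {F' : Finset α} (hxA : x ∈ A) (hxC : x ∉ C) (hxF : x ∈ F)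
    (hF' : F' ⊆ F) : clientWeight q A F' (insert x C) ≤ (q + 1) * clientWeight q A F C := by
  have hcard : #(A \ C) = #(A \ insert x C) + 1 := by
    rw [sdiff_insert, card_erase_add_one (mem_sdiff.mpr ⟨hxA, hxC⟩)]
  have hsub : insert x C ∪ F' ⊆ C ∪ F :=
    union_subset (insert_subset (mem_union_right _ hxF) subset_union_left)
      (hF'.trans subset_union_right)
  unfold clientWeight
  split_ifs with h' h
  · rw [hcard, pow_succ, mul_inv, mul_left_comm, mul_inv_cancel₀ (by positivity), mul_one]
  · exact absurd (h'.trans hsub) h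
  · positivity
  · simp

lemma clientWeight_insert_eq (h : ∀ y ∈ O, y ∈ A → y ∈ C) (hx : x ∈ O) :
    clientWeight q A (F \ O) (insert x C) = clientWeight q A F C := by
  have hdiff : A \ insert x C = A \ C := by
    rw [sdiff_insert, erase_eq_of_notMem]
    exact fun hxAC => (mem_sdiff.mp hxAC).2 (h x hx (mem_sdiff.mp hxAC).1)
  have hsub : A ⊆ insert x C ∪ (F \ O) ↔ A ⊆ C ∪ F := by
    simp only [subset_iff, mem_union, mem_insert, mem_sdiff]
    grind
  simp only [clientWeight, hdiff, hsub]

lemma sum_clientWeight_le (hOF : O ⊆ F) (hO : #O = q + 1) :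
    ∑ x ∈ O, clientWeight q A (F \ O) (insert x C) ≤ (q + 1) * clientWeight q A F C := by
  by_cases h : ∃ y ∈ O, y ∈ A ∧ y ∉ C
  · obtain ⟨y, hyO, hyA, hyC⟩ := h
    have hrest : ∀ x ∈ O.erase y, clientWeight q A (F \ O) (insert x C) = 0 := fun x hx =>
      clientWeight_eq_zero hyA (by simp [hyC, (ne_of_mem_erase hx).symm])
        (fun hy => (mem_sdiff.mp hy).2 hyO)
    rw [← add_sum_erase _ _ hyO, sum_eq_zero hrest, add_zero]
    exact clientWeight_insert_le hyA hyC (hOF hyO) sdiff_subset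
  · push Not at h
    rw [sum_congr rfl fun x hx => clientWeight_insert_eq h hx, sum_const, hO, nsmul_eq_mul]
    push_cast
    rfl

end Weight

theorem statement5_general {α : Type*} [DecidableEq α] {I : Type*} [Fintype I]
    (q : ℕ) (X : Finset α) (A : I → Finset α) :
    ClientCanEnsure q
      (fun C : Finset α =>
        (((Finset.univ.filter fun i : I => A i ⊆ C).card : ℝ) ≤
          ∑ i : I, ((q : ℝ) + 1) ^ (-((A i).card : ℤ))))
      X ∅ := by
  have hstart : ∑ i, clientWeight q (A i) X ∅ ≤ ∑ i, ((q : ℝ) + 1) ^ (-(#(A i) : ℤ)) :=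
    sum_le_sum fun i _ => clientWeight_le.trans_eq (by simp [zpow_neg])
  refine ClientCanEnsure.of_potential (fun F C => ∑ i, clientWeight q (A i) F C) ?_ ?_ X ∅ hstart
  · intro F C O hOF hO
    rw [sum_comm, mul_sum]
    exact sum_le_sum fun i _ => sum_clientWeight_le hOF hO
  · intro F C _ hΦ
    calc (#{i | A i ⊆ C} : ℝ) = ∑ i with A i ⊆ C, clientWeight q (A i) F C := by
          rw [sum_congr rfl fun i hi => clientWeight_of_subset (mem_filter.mp hi).2]
          simp
      _ ≤ ∑ i, clientWeight q (A i) F C :=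
          sum_le_sum_of_subset_of_nonneg (filter_subset _ _) fun _ _ _ => clientWeight_nonneg
      _ ≤ _ := hΦ

/-- Erdős–Selfridge type criterion, implicit in Beck's work.
If `Φ = ∑ i, (q+1)^{-|A i|}`, then in the Waiter-Client game with bias `q` played on the
finite board `X`, Client has a strategy ensuring that the number of indices `i` with
`A i ⊆ C` (where `C` is his final set) is at most `Φ`. -/
theorem statement5 {α : Type*} [DecidableEq α] {I : Type*} [Fintype I] [DecidableEq I]
    (q : ℕ) (hq : 0 < q) (X : Finset α) (A : I → Finset α) (hA : ∀ i, A i ⊆ X) :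
    ClientCanEnsure q
      (fun C : Finset α =>
        (((Finset.univ.filter fun i : I => A i ⊆ C).card : ℝ) ≤
          ∑ i : I, ((q : ℝ) + 1) ^ (-((A i).card : ℤ))))
      X ∅ :=
  statement5_general q X A
end

section
/- Let n be a positive integer and let η be an integer with 10·n^{3/4} ≤ η ≤ n−1, and set q = n − η. Then in the (q:1) Waiter-Client game on E(K_n) Waiter has a strategy to ensure that at the end of the game Client's graph contains a cycle of length at least η/6. -/
/-!
Waiter makes Client build a long path `X 0, X 1, …` and then closes it with a chord. Let
`w = ⌊η/6⌋ + 1`, `M = ⌊√n⌋ + 1` and `Q = q + 3 w + M + 2`. In round `t` Waiter offers edges from the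
endpoint `X t` to fresh vertices of the `t`-th window, the `Q` consecutive residues modulo `n`
starting at `⌊Q t / w⌋`; so every edge Waiter claims at `X t` ends in that window. The windows
advance by `Q` every `w` rounds, so a fixed vertex lies in the windows of at most `w` consecutive
rounds before the windows sweep past the other `n - Q` vertices. Hence for each late path vertex
`X j` many early rounds `i` had windows avoiding `X j`, and the chords `X i X j` are still free.
After `3 w + M` rounds Waiter offers `q + 1` of them; the one Client takes closes a cycle of
length at least `w + 2 > η / 6`.
-/

open SimpleGraph

open Finset

section Game

variable {α : Type*} [DecidableEq α] {q : ℕ} {P P' : Finset α → Prop} {F C : Finset α}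

theorem waiterCanForce_of_card_lt (h : F.card < q + 1) : WaiterCanForce q P F C ↔ P C := by
  rw [WaiterCanForce, if_pos h]

theorem waiterCanForce_of_le_card (h : q + 1 ≤ F.card) :
    WaiterCanForce q P F C ↔
      ∃ O ⊆ F, O.card = q + 1 ∧ ∀ x ∈ O, WaiterCanForce q P (F \ O) (insert x C) := by
  rw [WaiterCanForce, if_neg (by omega)]
  exact exists_congr fun O => and_congr_right fun hO =>
    and_congr_right fun _ => forall₂_congr fun _ _ => imp_iff_right hO

theorem WaiterCanForce.of_invariant (I : Finset α → Finset α → Prop)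
    (hend : ∀ F C, I F C → F.card < q + 1 → P C)
    (hstep : ∀ F C, I F C → q + 1 ≤ F.card →
      ∃ O ⊆ F, O.card = q + 1 ∧ ∀ x ∈ O, I (F \ O) (insert x C))
    (h : I F C) : WaiterCanForce q P F C := by
  induction hF : F.card using Nat.strong_induction_on generalizing F C with
  | _ N ih =>
    subst hF
    by_cases hsmall : F.card < q + 1
    · exact (waiterCanForce_of_card_lt hsmall).2 (hend F C h hsmall)
    · obtain ⟨O, hOF, hO, hI⟩ := hstep F C h (by omega)
      refine (waiterCanForce_of_le_card (by omega)).2 ⟨O, hOF, hO, fun x hx => ?_⟩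
      refine ih _ ?_ (hI x hx) rfl
      rw [card_sdiff_of_subset hOF, hO]
      omega

theorem WaiterCanForce.mono (hPP' : ∀ C, P C → P' C) (h : WaiterCanForce q P F C) :
    WaiterCanForce q P' F C := by
  refine WaiterCanForce.of_invariant (WaiterCanForce q P) (fun F C h hF => ?_)
    (fun F C h hF => ?_) h
  · exact hPP' C ((waiterCanForce_of_card_lt hF).1 h)
  · exact (waiterCanForce_of_le_card hF).1 h

end Game

section Cycles

variable {V : Type*} {G : SimpleGraph V} {X : ℕ → V} {i j : ℕ}

theorem exists_isPath_of_chain (hadj : ∀ t, i ≤ t → t < j → G.Adj (X t) (X (t + 1)))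
    (hinj : Set.InjOn X (Set.Icc i j)) (hij : i ≤ j) :
    ∃ p : G.Walk (X i) (X j), p.IsPath ∧ p.length = j - i ∧
      ∀ v ∈ p.support, v ∈ X '' Set.Icc i j := by
  induction hd : j - i generalizing i with
  | zero =>
    obtain rfl : i = j := by omega
    refine ⟨Walk.nil, Walk.IsPath.nil, rfl, fun v hv => ?_⟩
    rw [Walk.support_nil, List.mem_singleton] at hv
    exact ⟨i, Set.left_mem_Icc.2 le_rfl, hv.symm⟩
  | succ d ih =>
    obtain ⟨p, hp, hlen, hsupp⟩ := ih (i := i + 1) (fun t ht ht' => hadj t (by omega) ht')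
      (hinj.mono (Set.Icc_subset_Icc_left (by omega))) (by omega) (by omega)
    have hfresh : X i ∉ p.support := fun hmem => by
      obtain ⟨t, ht, hXt⟩ := hsupp _ hmem
      have := hinj (Set.Icc_subset_Icc_left (by omega) ht) (Set.left_mem_Icc.2 hij) hXt
      exact absurd ht.1 (by omega)
    refine ⟨Walk.cons (hadj i le_rfl (by omega)) p, hp.cons hfresh,
      by rw [Walk.length_cons, hlen], fun v hv => ?_⟩
    rcases (Walk.mem_support_iff _).1 hv with rfl | hv
    · exact ⟨i, Set.left_mem_Icc.2 hij, rfl⟩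
    · exact Set.image_mono (Set.Icc_subset_Icc_left (by omega)) (hsupp v hv)

theorem exists_isCycle_of_chain (hadj : ∀ t, i ≤ t → t < j → G.Adj (X t) (X (t + 1)))
    (hinj : Set.InjOn X (Set.Icc i j)) (hij : i + 2 ≤ j) (hchord : G.Adj (X j) (X i)) :
    ∃ (v : V) (c : G.Walk v v), c.IsCycle ∧ c.length = j - i + 1 := by
  obtain ⟨p, hp, hlen, hsupp⟩ := exists_isPath_of_chain (i := i + 1)
    (fun t ht ht' => hadj t (by omega) ht')
    (hinj.mono (Set.Icc_subset_Icc_left (by omega))) (by omega)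
  have hfresh : X i ∉ p.support := fun hmem => by
    obtain ⟨t, ht, hXt⟩ := hsupp _ hmem
    have := hinj (Set.Icc_subset_Icc_left (by omega) ht) (Set.left_mem_Icc.2 (by omega)) hXt
    exact absurd ht.1 (by omega)
  have hne : ∀ a b, i ≤ a → a ≤ j → i ≤ b → b ≤ j → a ≠ b → X a ≠ X b :=
    fun a b ha ha' hb hb' hab hX => hab (hinj ⟨ha, ha'⟩ ⟨hb, hb'⟩ hX)
  refine ⟨X j, Walk.cons hchord (Walk.cons (hadj i le_rfl (by omega)) p), ?_, ?_⟩
  · refine (Walk.cons_isCycle_iff _ _).2 ⟨hp.cons hfresh, ?_⟩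
    rw [Walk.edges_cons, List.mem_cons, Sym2.eq_iff, not_or]
    refine ⟨?_, fun hmem => hfresh (p.snd_mem_support_of_mem_edges hmem)⟩
    rintro (⟨h, -⟩ | ⟨h, -⟩)
    · exact hne j i (by omega) le_rfl le_rfl (by omega) (by omega) h
    · exact hne j (i + 1) (by omega) le_rfl (by omega) (by omega) (by omega) h
  · simp only [Walk.length_cons, hlen]
    omega

end Cycles

section Windows

variable {Q w : ℕ}

def window (Q w t : ℕ) : Finset ℕ := Ico (Q * t / w) (Q * t / w + Q)

theorem window_start_mono : Monotone fun t => Q * t / w :=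
  fun _ _ h => Nat.div_le_div_right (Nat.mul_le_mul_left Q h)

theorem window_start_add_period (hw : 0 < w) (t : ℕ) : Q * (t + w) / w = Q * t / w + Q := by
  rw [mul_add, Nat.add_mul_div_right _ _ hw]

theorem le_sub_of_window_start_gap (hw : 0 < w) {G t t' : ℕ}
    (hgap : Q * t / w + G < Q * t' / w) : G * w / Q ≤ t' - t := by
  have htt' : t ≤ t' := (window_start_mono.reflect_lt (by omega : Q * t / w < Q * t' / w)).le
  apply Nat.div_le_of_le_mul
  have hlow : Q * t < w * (Q * t / w + 1) := Nat.lt_mul_div_succ _ hw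
  have hhigh : Q * t' / w * w ≤ Q * t' := Nat.div_mul_le_self _ _
  have : (Q * t / w + G + 1) * w ≤ Q * t' / w * w := Nat.mul_le_mul_right w hgap
  have : G * w + Q * t ≤ Q * t' := by nlinarith
  rw [Nat.mul_sub]
  omega

theorem card_window_start_mem_Ioc (hw : 0 < w) {G x a b : ℕ} (ha : Q * a / w ≤ x)
    (hb : x + G < Q * b / w) :
    G * w / Q - 1 ≤ ((Iic b).filter fun t => x < Q * t / w ∧ Q * t / w ≤ x + G).card := by
  have hab : a ≤ b := (window_start_mono.reflect_lt (by omega : Q * a / w < Q * b / w)).le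
  set t₀ := Nat.findGreatest (fun t => Q * t / w ≤ x) b
  set t₁ := Nat.findGreatest (fun t => Q * t / w ≤ x + G) b
  have ht₀ : Q * t₀ / w ≤ x := Nat.findGreatest_spec (P := fun t => Q * t / w ≤ x) hab ha
  have ht₀₁ : t₀ ≤ t₁ := Nat.le_findGreatest (Nat.findGreatest_le b) (by omega)
  have ht₁ : Q * t₁ / w ≤ x + G :=
    Nat.findGreatest_spec (P := fun t => Q * t / w ≤ x + G) (m := t₀) (Nat.findGreatest_le b)
      (by omega)
  have ht₁b : t₁ < b :=
    lt_of_le_of_ne (Nat.findGreatest_le b) fun h => by rw [h] at ht₁; omega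
  have hnext : x + G < Q * (t₁ + 1) / w := by
    have := Nat.findGreatest_is_greatest (P := fun t => Q * t / w ≤ x + G) (Nat.lt_succ_self t₁)
      (by omega)
    simpa using this
  have hcount : G * w / Q ≤ t₁ + 1 - t₀ := le_sub_of_window_start_gap hw (by omega)
  calc G * w / Q - 1 ≤ (Ioc t₀ t₁).card := by rw [Nat.card_Ioc]; omega
    _ ≤ _ := by
      refine card_le_card fun t ht => ?_
      rw [mem_Ioc] at ht
      refine mem_filter.2 ⟨mem_Iic.2 (by omega), ?_, ?_⟩
      · by_contra! h
        exact Nat.findGreatest_is_greatest ht.1 (by omega) h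
      · exact (window_start_mono ht.2).trans ht₁

/-- The windows sweep the residues modulo `D` cyclically, so a fixed residue `ρ` is either
hit by a set of at most `w` consecutive rounds, or hit twice with a full sweep of the other
`D - Q` residues in between. -/
theorem card_rounds_window_avoids (hw : 0 < w) {D : ℕ} (hQD : Q ≤ D) (m ρ : ℕ) :
    min (m + 1 - w) ((D - Q) * w / Q - 1) ≤
      ((range (m + 1)).filter fun t => ∀ u ∈ window Q w t, u % D ≠ ρ).card := by
  set good := (range (m + 1)).filter fun t => ∀ u ∈ window Q w t, u % D ≠ ρ
  set bad := (range (m + 1)).filter fun t => ∃ u ∈ window Q w t, u % D = ρ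
  by_cases htwice : ∃ i ∈ bad, ∃ i' ∈ bad, i + w ≤ i'
  · obtain ⟨i, hi, i', hi', hii'⟩ := htwice
    obtain ⟨hi, u, hu, hρ⟩ := mem_filter.1 hi
    obtain ⟨hi', u', hu', hρ'⟩ := mem_filter.1 hi'
    rw [window, mem_Ico] at hu hu'
    have hshift := window_start_add_period (Q := Q) hw i
    have hmono := window_start_mono (Q := Q) (w := w) hii'
    have huu' : u + D ≤ u' :=
      Nat.ModEq.add_le_of_lt (hρ.trans hρ'.symm) (by simp only at hmono; omega)
    refine min_le_right _ _ |>.trans <| (card_window_start_mem_Ioc hw (a := i) (b := i')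
      (x := u) hu.1 (by omega)).trans (card_le_card fun t ht => ?_)
    obtain ⟨ht, hlo, hhi⟩ := mem_filter.1 ht
    rw [mem_Iic] at ht
    refine mem_filter.2 ⟨by rw [mem_range] at hi' ⊢; omega, fun v hv hv' => ?_⟩
    rw [window, mem_Ico] at hv
    have := Nat.ModEq.add_le_of_lt (hρ.trans hv'.symm) (by omega)
    omega
  · push Not at htwice
    have hbad : bad.card ≤ w := by
      rcases bad.eq_empty_or_nonempty with hempty | hne
      · simp [hempty]
      · calc bad.card ≤ (Ico (bad.min' hne) (bad.min' hne + w)).card :=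
            card_le_card fun i hi =>
              mem_Ico.2 ⟨bad.min'_le i hi, htwice _ (bad.min'_mem hne) i hi⟩
          _ = w := by simp
    have hcover : range (m + 1) ⊆ good ∪ bad := fun t ht => by
      by_cases h : ∃ u ∈ window Q w t, u % D = ρ
      · exact mem_union_right _ (mem_filter.2 ⟨ht, h⟩)
      · push Not at h
        exact mem_union_left _ (mem_filter.2 ⟨ht, h⟩)
    have := (card_le_card hcover).trans (card_union_le good bad)
    rw [card_range] at this
    omega

end Windows

theorem mem_knBoard {n : ℕ} {e : Sym2 (Fin n)} : e ∈ knBoard n ↔ ¬ e.IsDiag := by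
  simp [knBoard]

section Strategy

variable {n : ℕ} [NeZero n] {Q w M q r i j : ℕ} {F C : Finset (Sym2 (Fin n))}
  {X : ℕ → Fin n}

def windowVertices (n Q w t : ℕ) [NeZero n] : Finset (Fin n) := (window Q w t).image (Fin.ofNat n)

theorem card_windowVertices (hQn : Q ≤ n) (t : ℕ) : (windowVertices n Q w t).card = Q := by
  rw [windowVertices, card_image_of_injOn, window, Nat.card_Ico, Nat.add_sub_cancel_left]
  intro u hu u' hu' huu'
  rw [mem_coe, window, mem_Ico] at hu hu'
  have hmod : u ≡ u' [MOD n] := by simpa [Fin.ext_iff, Nat.ModEq] using huu'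
  by_contra hne
  rcases Nat.lt_or_gt_of_ne hne with h | h
  · have := hmod.add_le_of_lt h
    omega
  · have := hmod.symm.add_le_of_lt h
    omega

theorem not_mem_windowVertices {t : ℕ} {v : Fin n} (h : ∀ u ∈ window Q w t, u % n ≠ v) :
    v ∉ windowVertices n Q w t := by
  simp only [windowVertices, mem_image, not_exists, not_and]
  intro u hu huv
  exact h u hu (by rw [← huv, Fin.val_ofNat])

def HasCycleOfLengthGe {V : Type*} (L : ℕ) (C : Finset (Sym2 V)) : Prop :=
  ∃ (v : V) (c : (clientGraph C).Walk v v), c.IsCycle ∧ L ≤ c.length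

theorem HasCycleOfLengthGe.mono {V : Type*} {L L' : ℕ} {C C' : Finset (Sym2 V)} (hL : L' ≤ L)
    (hC : C ⊆ C') (h : HasCycleOfLengthGe L C) : HasCycleOfLengthGe L' C' := by
  obtain ⟨v, c, hc, hlen⟩ := h
  have hle : clientGraph C ≤ clientGraph C' := fromEdgeSet_mono (coe_subset.2 hC)
  exact ⟨v, c.mapLe hle, (Walk.isCycle_mapLe hle).2 hc, by rw [Walk.length_mapLe]; omega⟩

def IsWindowEdge (Q w : ℕ) (X : ℕ → Fin n) (r : ℕ) (e : Sym2 (Fin n)) : Prop :=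
  ∃ t < r, ∃ z ∈ windowVertices n Q w t, (∀ a ≤ t, X a ≠ z) ∧ e = s(X t, z)

theorem IsWindowEdge.of_eqOn {X' : ℕ → Fin n} {e : Sym2 (Fin n)} (h : IsWindowEdge Q w X r e)
    (hX : ∀ a ≤ r, X' a = X a) : IsWindowEdge Q w X' (r + 1) e := by
  obtain ⟨t, ht, z, hz, hfresh, rfl⟩ := h
  exact ⟨t, by omega, z, hz, fun a ha => hX a (by omega) ▸ hfresh a ha, by rw [hX t ht.le]⟩

/-- Client's path edges are window edges too, so `claimed` need not tell the players apart. -/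
structure PathPosition (Q w : ℕ) (F C : Finset (Sym2 (Fin n))) (r : ℕ) (X : ℕ → Fin n) :
    Prop where
  injOn : Set.InjOn X (Set.Iic r)
  path_mem : ∀ t < r, s(X t, X (t + 1)) ∈ C
  claimed : ∀ e ∈ knBoard n, e ∉ F → IsWindowEdge Q w X r e

namespace PathPosition

variable (h : PathPosition Q w F C r X)
include h

theorem not_isWindowEdge_extension {v : Fin n} (hv : ∀ a ≤ r, X a ≠ v) :
    ¬ IsWindowEdge Q w X r s(X r, v) := by
  rintro ⟨t, ht, z, -, -, he⟩
  rcases Sym2.eq_iff.1 he with ⟨hrt, -⟩ | ⟨-, hvt⟩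
  · exact ht.ne (h.injOn (Set.mem_Iic.2 ht.le) (Set.mem_Iic.2 le_rfl) hrt.symm)
  · exact hv t ht.le hvt.symm

theorem not_isWindowEdge_chord (hij : i < j) (hj : j ≤ r)
    (hout : X j ∉ windowVertices n Q w i) : ¬ IsWindowEdge Q w X r s(X i, X j) := by
  rintro ⟨t, ht, z, hz, hfresh, he⟩
  rcases Sym2.eq_iff.1 he with ⟨hit, hjz⟩ | ⟨hiz, hjt⟩
  · obtain rfl := h.injOn (Set.mem_Iic.2 (by omega)) (Set.mem_Iic.2 ht.le) hit
    exact hout (hjz ▸ hz)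
  · obtain rfl := h.injOn (Set.mem_Iic.2 hj) (Set.mem_Iic.2 ht.le) hjt
    exact hfresh i hij.le hiz

theorem extend {v : Fin n} (hv : ∀ a ≤ r, X a ≠ v) {O : Finset (Sym2 (Fin n))}
    (hO : ∀ e ∈ O, ∃ z ∈ windowVertices n Q w r,
      (∀ a ≤ r, X a ≠ z) ∧ e = s(X r, z)) :
    PathPosition Q w (F \ O) (insert s(X r, v) C) (r + 1) (Function.update X (r + 1) v) := by
  set X' := Function.update X (r + 1) v
  have hagree : ∀ a ≤ r, X' a = X a := fun a ha => Function.update_of_ne (by omega) _ _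
  have hnew : X' (r + 1) = v := Function.update_self _ _ _
  refine ⟨fun a ha b hb hab => ?_, fun t ht => ?_, fun e he heF => ?_⟩
  · rw [Set.mem_Iic] at ha hb
    rcases (show a ≤ r ∨ a = r + 1 by omega) with ha | rfl <;>
      rcases (show b ≤ r ∨ b = r + 1 by omega) with hb | rfl
    · rw [hagree a ha, hagree b hb] at hab
      exact h.injOn ha hb hab
    · rw [hagree a ha, hnew] at hab
      exact absurd hab (hv a ha)
    · rw [hnew, hagree b hb] at hab
      exact absurd hab.symm (hv b hb)
    · rfl
  · rcases (show t < r ∨ t = r by omega) with ht | rfl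
    · rw [hagree t ht.le, hagree (t + 1) ht]
      exact mem_insert_of_mem (h.path_mem t ht)
    · rw [hagree t le_rfl, hnew]
      exact mem_insert_self _ _
  · by_cases heO : e ∈ O
    · obtain ⟨z, hz, hfresh, rfl⟩ := hO e heO
      exact ⟨r, r.lt_succ_self, z, hz, fun a ha => hagree a ha ▸ hfresh a ha,
        by rw [hagree r le_rfl]⟩
    · exact (h.claimed e he fun heF' => heF (mem_sdiff.2 ⟨heF', heO⟩)).of_eqOn hagree

/-- Extension round: Waiter offers `q + 1` edges from the endpoint `X r` to fresh vertices of
the `r`-th window. -/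
theorem exists_extension_offer (hQn : Q ≤ n) (hroom : q + r + 2 ≤ Q) :
    ∃ O ⊆ F, O.card = q + 1 ∧
      ∀ x ∈ O, ∃ X', PathPosition Q w (F \ O) (insert x C) (r + 1) X' := by
  set fresh := windowVertices n Q w r \ (range (r + 1)).image X
  have hfresh : ∀ v ∈ fresh, v ∈ windowVertices n Q w r ∧ ∀ a ≤ r, X a ≠ v := by
    intro v hv
    simp only [fresh, mem_sdiff, mem_image, mem_range, not_exists, not_and] at hv
    exact ⟨hv.1, fun a ha => hv.2 a (by omega)⟩
  have hcard : q + 1 ≤ fresh.card := by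
    refine le_trans ?_ (le_card_sdiff _ _)
    have := (card_image_le (s := range (r + 1)) (f := X)).trans_eq (card_range _)
    rw [card_windowVertices hQn]
    omega
  set E := fresh.image fun v => s(X r, v)
  have hE : E.card = fresh.card := card_image_of_injective _ fun _ _ => Sym2.congr_right.1
  have hEF : E ⊆ F := by
    intro e he
    obtain ⟨v, hv, rfl⟩ := mem_image.1 he
    have hvX := (hfresh v hv).2
    by_contra hF
    refine h.not_isWindowEdge_extension hvX (h.claimed _ ?_ hF)
    rw [mem_knBoard, Sym2.mk_isDiag_iff]
    exact hvX r le_rfl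
  obtain ⟨O, hOE, hO⟩ := exists_subset_card_eq (hcard.trans hE.ge)
  refine ⟨O, hOE.trans hEF, hO, fun x hx => ?_⟩
  obtain ⟨v, hv, rfl⟩ := mem_image.1 (hOE hx)
  refine ⟨_, h.extend (hfresh v hv).2 fun e he => ?_⟩
  obtain ⟨z, hz, rfl⟩ := mem_image.1 (hOE he)
  exact ⟨z, (hfresh z hz).1, (hfresh z hz).2, rfl⟩

theorem hasCycleOfLengthGe_insert_chord {L : ℕ} (hij : i + 2 ≤ j) (hj : j ≤ r)
    (hL : L + i ≤ j + 1) : HasCycleOfLengthGe L (insert s(X i, X j) C) := by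
  have hinj : Set.InjOn X (Set.Icc i j) := h.injOn.mono fun t ht => Set.mem_Iic.2 (ht.2.trans hj)
  have hne : ∀ a b, a ≤ r → b ≤ r → a ≠ b → X a ≠ X b :=
    fun a b ha hb hab hX => hab (h.injOn (Set.mem_Iic.2 ha) (Set.mem_Iic.2 hb) hX)
  obtain ⟨v, c, hc, hlen⟩ := exists_isCycle_of_chain (G := clientGraph (insert s(X i, X j) C))
    (fun t _ ht => (fromEdgeSet_adj _).2 ⟨mem_insert_of_mem (h.path_mem t (by omega)),
      hne t (t + 1) (by omega) (by omega) (by omega)⟩) hinj hij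
    ((fromEdgeSet_adj _).2 ⟨by rw [Sym2.eq_swap]; exact mem_insert_self _ _,
      hne j i hj (by omega) (by omega)⟩)
  exact ⟨v, c, hc, by omega⟩

/-- Chord round: the `q + 1` offered edges close the path into a cycle, joining some `X j` near
its end to some `X i` near its start whose window avoided `X j`. -/
theorem exists_chord_offer (hr : r = 3 * w + M) (hw : 0 < w) (hQn : Q ≤ n)
    (hcount : q + 1 ≤ M * min (w + 1) ((n - Q) * w / Q - 1)) :
    ∃ O ⊆ F, O.card = q + 1 ∧ ∀ x ∈ O, HasCycleOfLengthGe (w + 2) (insert x C) := by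
  subst hr
  set avoid := fun j => (range (2 * w + 1)).filter fun i => ∀ u ∈ window Q w i, u % n ≠ X j
  set pairs := (Ioc (3 * w) (3 * w + M)).sigma avoid
  have hpair : ∀ p ∈ pairs, p.2 ≤ 2 * w ∧ 3 * w < p.1 ∧ p.1 ≤ 3 * w + M ∧
      X p.1 ∉ windowVertices n Q w p.2 := by
    rintro ⟨j, i⟩ hp
    simp only [pairs, avoid, mem_sigma, mem_Ioc, mem_filter, mem_range] at hp
    exact ⟨by dsimp only; omega, hp.1.1, hp.1.2, not_mem_windowVertices hp.2.2⟩
  set chords := pairs.image fun p => s(X p.2, X p.1)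
  have hcard : q + 1 ≤ chords.card := by
    rw [card_image_of_injOn, card_sigma]
    · calc q + 1 ≤ (Ioc (3 * w) (3 * w + M)).card • min (w + 1) ((n - Q) * w / Q - 1) := by
            simpa using hcount
        _ ≤ _ := card_nsmul_le_sum _ _ _ fun j _ => by
            simpa [show 2 * w + 1 - w = w + 1 by omega] using
              card_rounds_window_avoids (w := w) hw hQn (2 * w) (X j)
    · rintro ⟨j, i⟩ hp ⟨j', i'⟩ hp' heq
      obtain ⟨hi, hj, hjr, -⟩ := hpair _ hp
      obtain ⟨hi', hj', hjr', -⟩ := hpair _ hp'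
      have hX : ∀ {a b}, a ≤ 3 * w + M → b ≤ 3 * w + M → X a = X b → a = b :=
        fun ha hb hab => h.injOn (Set.mem_Iic.2 ha) (Set.mem_Iic.2 hb) hab
      rcases Sym2.eq_iff.1 heq with ⟨hii, hjj⟩ | ⟨hij, -⟩
      · obtain rfl := hX (by omega) (by omega) hii
        obtain rfl := hX hjr hjr' hjj
        rfl
      · have := hX (by omega) hjr' hij
        omega
  have hsub : chords ⊆ F := by
    intro e he
    obtain ⟨⟨j, i⟩, hp, rfl⟩ := mem_image.1 he
    obtain ⟨hi, hj, hjr, hout⟩ := hpair _ hp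
    by_contra hF
    refine h.not_isWindowEdge_chord (by omega) hjr hout (h.claimed _ ?_ hF)
    rw [mem_knBoard, Sym2.mk_isDiag_iff]
    intro hij
    have := h.injOn (Set.mem_Iic.2 (by omega)) (Set.mem_Iic.2 hjr) hij
    omega
  obtain ⟨O, hOc, hO⟩ := exists_subset_card_eq hcard
  refine ⟨O, hOc.trans hsub, hO, fun x hx => ?_⟩
  obtain ⟨⟨j, i⟩, hp, rfl⟩ := mem_image.1 (hOc hx)
  obtain ⟨hi, hj, hjr, -⟩ := hpair _ hp
  exact h.hasCycleOfLengthGe_insert_chord (by omega) hjr (by omega)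

theorem exists_offer (hr : r ≤ 3 * w + M) (hw : 0 < w) (hQn : Q ≤ n)
    (hroom : q + 3 * w + M + 1 ≤ Q) (hcount : q + 1 ≤ M * min (w + 1) ((n - Q) * w / Q - 1)) :
    ∃ O ⊆ F, O.card = q + 1 ∧ ∀ x ∈ O,
      (∃ r' ≤ 3 * w + M, ∃ X', PathPosition Q w (F \ O) (insert x C) r' X') ∨
        HasCycleOfLengthGe (w + 2) (insert x C) := by
  rcases hr.lt_or_eq with hr | hr
  · obtain ⟨O, hOF, hO, hnext⟩ := h.exists_extension_offer (q := q) hQn (by omega)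
    exact ⟨O, hOF, hO, fun x hx => Or.inl ⟨r + 1, hr, hnext x hx⟩⟩
  · obtain ⟨O, hOF, hO, hcycle⟩ := h.exists_chord_offer hr hw hQn hcount
    exact ⟨O, hOF, hO, fun x hx => Or.inr (hcycle x hx)⟩

end PathPosition

theorem waiterCanForce_hasCycleOfLengthGe (hw : 0 < w) (hQn : Q ≤ n)
    (hroom : q + 3 * w + M + 1 ≤ Q) (hcount : q + 1 ≤ M * min (w + 1) ((n - Q) * w / Q - 1)) :
    WaiterCanForce q (HasCycleOfLengthGe (w + 2)) (knBoard n) ∅ := by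
  refine WaiterCanForce.of_invariant
    (fun F C => (∃ r ≤ 3 * w + M, ∃ X, PathPosition Q w F C r X) ∨
      HasCycleOfLengthGe (w + 2) C)
    ?_ ?_ (Or.inl ⟨0, Nat.zero_le _, fun _ => 0, ?_⟩)
  · rintro F C (⟨r, hr, X, h⟩ | hcycle) hF
    · obtain ⟨O, hOF, hO, -⟩ := h.exists_offer hr hw hQn hroom hcount
      exact absurd (card_le_card hOF) (by omega)
    · exact hcycle
  · rintro F C (⟨r, hr, X, h⟩ | hcycle) hF
    · exact h.exists_offer hr hw hQn hroom hcount
    · obtain ⟨O, hOF, hO⟩ := exists_subset_card_eq hF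
      exact ⟨O, hOF, hO, fun x _ => Or.inr (hcycle.mono le_rfl (subset_insert x C))⟩
  · exact ⟨fun a ha b hb _ => by simp_all, fun t ht => absurd ht t.not_lt_zero,
      fun e he hF => absurd he hF⟩

end Strategy

section Parameters

theorem ten_thousand_mul_pow_three_le {n η : ℕ} (hη : 10 * (n : ℝ) ^ ((3 : ℝ) / 4) ≤ η) :
    10000 * n ^ 3 ≤ η ^ 4 := by
  have hpow : ((n : ℝ) ^ ((3 : ℝ) / 4)) ^ 4 = (n : ℝ) ^ 3 := by
    rw [← Real.rpow_natCast, ← Real.rpow_mul n.cast_nonneg]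
    norm_num
  have := pow_le_pow_left₀ (by positivity) hη 4
  rw [mul_pow, hpow] at this
  exact_mod_cast (by norm_num at this ⊢; linarith : (10000 : ℝ) * n ^ 3 ≤ η ^ 4)

theorem mul_sqrt_le_sq {n η : ℕ} (h : 10000 * n ^ 3 ≤ η ^ 4) :
    100 * (n * Nat.sqrt n) ≤ η ^ 2 := by
  have hs := Nat.sqrt_le' n
  rw [← Nat.pow_le_pow_iff_left two_ne_zero]
  calc (100 * (n * Nat.sqrt n)) ^ 2 = 10000 * n ^ 2 * Nat.sqrt n ^ 2 := by ring
    _ ≤ 10000 * n ^ 2 * n := Nat.mul_le_mul_left _ hs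
    _ = 10000 * n ^ 3 := by ring
    _ ≤ (η ^ 2) ^ 2 := by rw [← pow_mul]; exact h

/-- Both `w + 1` and the number `(n - Q) w / Q` of rounds the windows need to sweep past the
`n - Q` vertices outside one window exceed `√n`, so `M` chord endpoints yield more than `q`
chords. -/
theorem chord_parameters {n η w M Q : ℕ} (hn : 0 < n) (h : 10000 * n ^ 3 ≤ η ^ 4)
    (hηn : η < n) (hw : w = η / 6 + 1) (hM : M = Nat.sqrt n + 1)
    (hQ : Q = n - η + 3 * w + M + 2) :
    Q ≤ n ∧ n - η + 1 ≤ M * min (w + 1) ((n - Q) * w / Q - 1) := by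
  set s := Nat.sqrt n
  have hs1 : 1 ≤ s := Nat.sqrt_pos.2 hn
  have hns : n < (s + 1) * (s + 1) := Nat.lt_succ_sqrt n
  have hsq := mul_sqrt_le_sq h
  have hη : 100 * s ≤ η := by
    by_contra! hlt
    have : η * η < 100 * s * n := Nat.mul_lt_mul_of_lt_of_le hlt hηn.le (by omega)
    nlinarith
  have hQn : Q ≤ n := by omega
  have hsweep : s + 2 ≤ (n - Q) * w / Q := by
    rw [Nat.le_div_iff_mul_le (by omega)]
    have hG : 2 * η ≤ 5 * (n - Q) := by omega
    have hw6 : η + 1 ≤ 6 * w := by omega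
    have : 2 * η * (η + 1) ≤ 5 * (n - Q) * (6 * w) := Nat.mul_le_mul hG hw6
    have : (s + 2) * Q ≤ (s + 2) * n := Nat.mul_le_mul_left _ hQn
    nlinarith
  refine ⟨hQn, ?_⟩
  calc n - η + 1 ≤ (s + 1) * (s + 1) := by omega
    _ ≤ M * min (w + 1) ((n - Q) * w / Q - 1) := by
      rw [hM]
      exact Nat.mul_le_mul_left _ (le_min (by omega) (by omega))

end Parameters

/-- Let `10 n^{3/4} ≤ η ≤ n - 1` and `q = n - η`.  In the `(q : 1)`
Waiter-Client game on `E(K_n)` Waiter has a strategy ensuring that at the end of the game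
Client's graph contains a cycle of length at least `η / 6`. -/
theorem statement12 (n η : ℕ) (hn : 0 < n)
    (hη : 10 * (n : ℝ) ^ ((3 : ℝ) / 4) ≤ (η : ℝ)) (hη' : η ≤ n - 1) :
    WaiterCanForce (n - η)
      (fun C : Finset (Sym2 (Fin n)) =>
        ∃ (v : Fin n) (w : (clientGraph C).Walk v v), w.IsCycle ∧
          (η : ℝ) / 6 ≤ (w.length : ℝ))
      (knBoard n) ∅ := by
  have : NeZero n := ⟨hn.ne'⟩
  obtain ⟨hQn, hcount⟩ := chord_parameters hn (ten_thousand_mul_pow_three_le hη) (by omega)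
    rfl rfl rfl
  refine WaiterCanForce.mono (fun C hC => ?_)
    (waiterCanForce_hasCycleOfLengthGe (q := n - η) (by omega) hQn (by omega) hcount)
  obtain ⟨v, c, hc, hlen⟩ := hC
  refine ⟨v, c, hc, ?_⟩
  rw [div_le_iff₀ (by norm_num)]
  exact_mod_cast (by omega : η ≤ c.length * 6)
end
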